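/- For all x₁, x₂ > 0 with α₀ ≤ x₁/x₂ ≤ β₀*, the second partial derivative of the value function with the optimal barrier is nonpositive: ∂²G/∂x₁² (x₁, x₂; β₀*) ≤ 0. -/

import Mathlib

/-!
Up to the positive factor `α₀ x₂` and the denominator `D(β)`, which does not depend on `x₁`,
`G` is `φ(x₁ / (α₀ x₂))` with `φ(u) = u ^ ζ₁ - u ^ ζ₂`, so `∂²G/∂x₁²` has the sign of
`φ''(u) / D(β)`. Since `ζ₁ < 0 < 1 < ζ₂`, `D(β) < 0`, while
`φ''(u) = u ^ (ζ₁ - 2) (ζ₁ (ζ₁ - 1) - ζ₂ (ζ₂ - 1) u ^ (ζ₂ - ζ₁))` is nonnegative exactly for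
`u ^ (ζ₂ - ζ₁) ≤ ζ₁ (ζ₁ - 1) / (ζ₂ (ζ₂ - 1)) = (β₀* / α₀) ^ (ζ₂ - ζ₁)`, i.e. for `x₁ / x₂ ≤ β₀*`:
the optimal barrier is the inflection point of `φ`.
-/

open Real Filter Topology

/-- The value function `G(x₁, x₂; β)` of the barrier strategy with barrier `β`
and ruin level `α₀`. -/
noncomputable def Gb (α₀ ζ₁ ζ₂ β x₁ x₂ : ℝ) : ℝ :=
  α₀ * x₂ * ((x₁ / (α₀ * x₂)) ^ ζ₁ - (x₁ / (α₀ * x₂)) ^ ζ₂) /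
    (ζ₁ * (β / α₀) ^ (ζ₁ - 1) - ζ₂ * (β / α₀) ^ (ζ₂ - 1))

theorem deriv_deriv_comp_mul_left {𝕜 : Type*} [NontriviallyNormedField 𝕜] (c : 𝕜) (f : 𝕜 → 𝕜)
    (x : 𝕜) :
    deriv (deriv fun t => f (c * t)) x = c ^ 2 * deriv (deriv f) (c * x) := by
  have h : (deriv fun t => f (c * t)) = fun t => c * deriv f (c * t) :=
    funext fun t => deriv_comp_mul_left c f t
  rw [h, deriv_const_mul_field, deriv_comp_mul_left, smul_eq_mul, sq, mul_assoc]

theorem deriv_deriv_rpow_sub_rpow (a b : ℝ) {u : ℝ} (hu : u ≠ 0) :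
    deriv (deriv fun v : ℝ => v ^ a - v ^ b) u
      = a * (a - 1) * u ^ (a - 2) - b * (b - 1) * u ^ (b - 2) := by
  have hderiv : (deriv fun v : ℝ => v ^ a - v ^ b)
      =ᶠ[𝓝 u] fun v => a * v ^ (a - 1) - b * v ^ (b - 1) := by
    filter_upwards [isOpen_ne.mem_nhds hu] with v hv
    rw [deriv_fun_sub (differentiableAt_rpow_const_of_ne a hv)
      (differentiableAt_rpow_const_of_ne b hv), Real.deriv_rpow_const, Real.deriv_rpow_const]
  rw [hderiv.deriv_eq, deriv_fun_sub
      ((differentiableAt_rpow_const_of_ne _ hu).const_mul a)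
      ((differentiableAt_rpow_const_of_ne _ hu).const_mul b),
    deriv_const_mul_field, deriv_const_mul_field, Real.deriv_rpow_const, Real.deriv_rpow_const]
  ring_nf

theorem deriv_deriv_Gb (α₀ ζ₁ ζ₂ β x₁ x₂ : ℝ) (hu : x₁ / (α₀ * x₂) ≠ 0) :
    deriv (deriv fun t => Gb α₀ ζ₁ ζ₂ β t x₂) x₁
      = (ζ₁ * (ζ₁ - 1) * (x₁ / (α₀ * x₂)) ^ (ζ₁ - 2)
          - ζ₂ * (ζ₂ - 1) * (x₁ / (α₀ * x₂)) ^ (ζ₂ - 2))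
        / (α₀ * x₂ * (ζ₁ * (β / α₀) ^ (ζ₁ - 1) - ζ₂ * (β / α₀) ^ (ζ₂ - 1))) := by
  set c := α₀ * x₂
  set D := ζ₁ * (β / α₀) ^ (ζ₁ - 1) - ζ₂ * (β / α₀) ^ (ζ₂ - 1)
  have hc : c ≠ 0 := by rintro hc; simp [hc] at hu
  have hG : (fun t => Gb α₀ ζ₁ ζ₂ β t x₂)
      = fun t => c / D * (fun v : ℝ => v ^ ζ₁ - v ^ ζ₂) (c⁻¹ * t) := by
    funext t
    show c * ((t / c) ^ ζ₁ - (t / c) ^ ζ₂) / D = _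
    rw [div_eq_inv_mul t c]
    ring
  rw [hG, deriv_const_mul_field', deriv_const_mul_field,
    deriv_deriv_comp_mul_left c⁻¹ (fun v : ℝ => v ^ ζ₁ - v ^ ζ₂),
    ← div_eq_inv_mul, deriv_deriv_rpow_sub_rpow _ _ hu]
  field_simp

theorem mul_rpow_sub_mul_rpow_neg {ζ₁ ζ₂ r : ℝ} (hζ₁ : ζ₁ < 0) (hζ₂ : 1 < ζ₂) (hr : 0 < r) :
    ζ₁ * r ^ (ζ₁ - 1) - ζ₂ * r ^ (ζ₂ - 1) < 0 := by
  have h₁ : ζ₁ * r ^ (ζ₁ - 1) < 0 := mul_neg_of_neg_of_pos hζ₁ (rpow_pos_of_pos hr _)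
  have h₂ : 0 < ζ₂ * r ^ (ζ₂ - 1) := mul_pos (by linarith) (rpow_pos_of_pos hr _)
  linarith

theorem mul_rpow_add_le_mul_rpow {u A B p e : ℝ} (hu : 0 < u) (hB : 0 < B)
    (h : u ^ e ≤ A / B) : B * u ^ (p + e) ≤ A * u ^ p := by
  calc B * u ^ (p + e) = B * u ^ e * u ^ p := by rw [rpow_add hu]; ring
    _ ≤ A * u ^ p :=
      mul_le_mul_of_nonneg_right ((le_div_iff₀' hB).1 h) (rpow_pos_of_pos hu _).le

theorem stmt_9_general (ζ₁ ζ₂ α₀ β₀ : ℝ)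
    (hζ₁ : ζ₁ < 0) (hζ₂ : 1 < ζ₂)
    (hα₀ : 0 < α₀)
    (hβ₀ : β₀ = α₀ * (ζ₁ * (ζ₁ - 1) / (ζ₂ * (ζ₂ - 1))) ^ (1 / (ζ₂ - ζ₁))) :
    ∀ x₁ x₂ : ℝ, 0 < x₁ → 0 < x₂ → α₀ ≤ x₁ / x₂ → x₁ / x₂ ≤ β₀ →
      deriv (deriv (fun t => Gb α₀ ζ₁ ζ₂ β₀ t x₂)) x₁ ≤ 0 := by
  intro x₁ x₂ hx₁ hx₂ _ hle
  set u := x₁ / (α₀ * x₂)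
  have hu : 0 < u := by positivity
  have hz₂ : 0 < ζ₂ * (ζ₂ - 1) := by nlinarith
  have hR : 0 < ζ₁ * (ζ₁ - 1) / (ζ₂ * (ζ₂ - 1)) := div_pos (by nlinarith) hz₂
  have hβα : β₀ / α₀ = (ζ₁ * (ζ₁ - 1) / (ζ₂ * (ζ₂ - 1))) ^ (ζ₂ - ζ₁)⁻¹ := by
    rw [hβ₀, mul_div_cancel_left₀ _ hα₀.ne', one_div]
  have hu_le : u ^ (ζ₂ - ζ₁) ≤ ζ₁ * (ζ₁ - 1) / (ζ₂ * (ζ₂ - 1)) := by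
    rw [← le_rpow_inv_iff_of_pos hu.le hR.le (by linarith), ← hβα]
    show x₁ / (α₀ * x₂) ≤ β₀ / α₀
    rw [mul_comm, ← div_div]
    exact div_le_div_of_nonneg_right hle hα₀.le
  have hnum := mul_rpow_add_le_mul_rpow (p := ζ₁ - 2) hu hz₂ hu_le
  rw [show ζ₁ - 2 + (ζ₂ - ζ₁) = ζ₂ - 2 by ring] at hnum
  rw [deriv_deriv_Gb _ _ _ _ _ _ hu.ne']
  refine div_nonpos_of_nonneg_of_nonpos (by linarith) (mul_nonpos_of_nonneg_of_nonpos ?_ ?_)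
  · positivity
  · have hβα_pos : 0 < β₀ / α₀ := hβα ▸ rpow_pos_of_pos hR _
    exact (mul_rpow_sub_mul_rpow_neg hζ₁ hζ₂ hβα_pos).le

/-- concavity of the value function at the optimal barrier:
`∂²G/∂x₁²(x₁,x₂;β₀*) ≤ 0` on the continuation region `α₀ ≤ x₁/x₂ ≤ β₀*`. -/
theorem stmt_9 (μA μL δ σA σL ρ ζ₁ ζ₂ α₀ β₀ : ℝ)
    (hσA : 0 < σA) (hσL : 0 < σL) (hρ₁ : -1 < ρ) (hρ₂ : ρ < 1)
    (hμ : μL < μA) (hδ : μA < δ)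
    (hroot₁ : (1 / 2) * (σA ^ 2 + σL ^ 2 - 2 * ρ * σA * σL) * ζ₁ * (ζ₁ - 1)
      + (μA - μL) * ζ₁ + (μL - δ) = 0)
    (hroot₂ : (1 / 2) * (σA ^ 2 + σL ^ 2 - 2 * ρ * σA * σL) * ζ₂ * (ζ₂ - 1)
      + (μA - μL) * ζ₂ + (μL - δ) = 0)
    (hζlt : ζ₁ < ζ₂) (hζ₁ : ζ₁ < 0) (hζ₂ : 1 < ζ₂)
    (hα₀ : 0 < α₀)
    (hβ₀ : β₀ = α₀ * (ζ₁ * (ζ₁ - 1) / (ζ₂ * (ζ₂ - 1))) ^ (1 / (ζ₂ - ζ₁))) :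
    ∀ x₁ x₂ : ℝ, 0 < x₁ → 0 < x₂ → α₀ ≤ x₁ / x₂ → x₁ / x₂ ≤ β₀ →
      deriv (deriv (fun t => Gb α₀ ζ₁ ζ₂ β₀ t x₂)) x₁ ≤ 0 :=
  stmt_9_general ζ₁ ζ₂ α₀ β₀ hζ₁ hζ₂ hα₀ hβ₀
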